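/- arXiv:0906.3494 — 4 statements merged into one kernel-verified Lean document; each statement's English description precedes it below -/
import Mathlib

section
/- If F̄ : T₁ × T₂ × T₃ → ℝ is a measurable function such that A_T F(x,y,z) → F̄(x,y,z) as T → ∞ for μ-almost every (x,y,z), then ∫ F̄ dμ = ∫ F dμ. -/
open MeasureTheory Filter

/-!
Write `Ψ v = Φ₁ v₁ × Φ₂ v₂ × Φ₃ v₃` for `v ∈ ℝ³`. By Fubini, `A_T F (p)` is the average of
`F (Ψ v p)` over the uniform probability measure on the cube `(0, T]³`. Each `F ∘ Ψ v` has the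
same law as `F`, so this family is uniformly integrable, and averaging against probability
measures preserves uniform integrability; each average also has integral `∫ F`. Along `T = n + 1`,
Vitali's convergence theorem upgrades the a.e. convergence `A_T F → F̄` to convergence in `L¹`, so
`∫ F̄ = lim ∫ A_T F = ∫ F`.
-/

open ProbabilityTheory Function Set
open scoped ENNReal Topology

namespace MeasureTheory

variable {α V : Type*} [MeasurableSpace α] [MeasurableSpace V] {μ : Measure α}

theorem eLpNorm_one_indicator_integral_le [SFinite μ] {ν : Measure V} [IsProbabilityMeasure ν]
    {g : V → α → ℝ} (hg : AEStronglyMeasurable (uncurry g) (ν.prod μ)) {s : Set α}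
    (hs : MeasurableSet s) {C : ℝ≥0∞} (hC : ∀ v, eLpNorm (s.indicator (g v)) 1 μ ≤ C) :
    eLpNorm (s.indicator fun p => ∫ v, g v p ∂ν) 1 μ ≤ C := by
  simp only [eLpNorm_one_eq_lintegral_enorm, enorm_indicator_eq_indicator_enorm,
    lintegral_indicator hs] at hC ⊢
  have hgs : AEMeasurable (uncurry fun v p => ‖g v p‖ₑ) (ν.prod (μ.restrict s)) := by
    rw [← Measure.restrict_univ (μ := ν), Measure.prod_restrict]
    exact hg.enorm.restrict
  calc ∫⁻ p in s, ‖∫ v, g v p ∂ν‖ₑ ∂μ ≤ ∫⁻ p in s, ∫⁻ v, ‖g v p‖ₑ ∂ν ∂μ :=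
        lintegral_mono fun p => enorm_integral_le_lintegral_enorm _
    _ = ∫⁻ v, ∫⁻ p in s, ‖g v p‖ₑ ∂μ ∂ν := (lintegral_lintegral_swap hgs).symm
    _ ≤ ∫⁻ _, C ∂ν := lintegral_mono hC
    _ = C := by simp

theorem UniformIntegrable.integral_of_isProbabilityMeasure [SFinite μ] {ι : Type*}
    {ν : ι → Measure V} [∀ i, IsProbabilityMeasure (ν i)] {g : V → α → ℝ}
    (hg : UniformIntegrable g 1 μ) (hgm : ∀ i, AEStronglyMeasurable (uncurry g) ((ν i).prod μ)) :
    UniformIntegrable (fun i p => ∫ v, g v p ∂ν i) 1 μ := by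
  obtain ⟨-, hunif, C, hC⟩ := hg
  refine ⟨fun i => (hgm i).prod_swap.integral_prod_right', fun ε hε => ?_, C, fun i => ?_⟩
  · obtain ⟨δ, hδ, hδε⟩ := hunif hε
    exact ⟨δ, hδ, fun i s hs hμs =>
      eLpNorm_one_indicator_integral_le (hgm i) hs fun v => hδε v s hs hμs⟩
  · simpa using eLpNorm_one_indicator_integral_le (hgm i) MeasurableSet.univ
      fun v => by simpa using hC v

theorem MeasurePreserving.identDistrib_comp {β E : Type*} [MeasurableSpace β] [MeasurableSpace E]
    {ν : Measure β} {τ : α → β} (hτ : MeasurePreserving τ μ ν) {F : β → E}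
    (hF : AEMeasurable F ν) : IdentDistrib (F ∘ τ) F μ ν :=
  (⟨hτ.aemeasurable, aemeasurable_id, by rw [hτ.map_eq, Measure.map_id]⟩ :
    IdentDistrib τ id μ ν).comp_of_aemeasurable (by rwa [hτ.map_eq])

theorem uniformIntegrable_comp_measurePreserving [IsFiniteMeasure μ] {ι : Type*} [Nonempty ι]
    {τ : ι → α → α} {F : α → ℝ} (hF : Integrable F μ) (hτ : ∀ i, MeasurePreserving (τ i) μ μ) :
    UniformIntegrable (fun i => F ∘ τ i) 1 μ := by
  obtain ⟨i₀⟩ := ‹Nonempty ι›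
  have hident : ∀ i, IdentDistrib (F ∘ τ i) F μ μ := fun i =>
    (hτ i).identDistrib_comp hF.aemeasurable
  exact MemLp.uniformIntegrable_of_identDistrib (j := i₀) le_rfl ENNReal.one_ne_top
    ((hident i₀).memLp_iff.2 (memLp_one_iff_integrable.2 hF))
    fun i => (hident i).trans (hident i₀).symm

variable {Ψ : V → α → α}

theorem measurePreserving_uncurry [SFinite μ] {ν : Measure V} [IsProbabilityMeasure ν]
    (hΨ : Measurable (uncurry Ψ)) (hΨμ : ∀ v, MeasurePreserving (Ψ v) μ μ) :
    MeasurePreserving (uncurry Ψ) (ν.prod μ) μ :=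
  measurePreserving_snd.comp
    ((MeasurePreserving.id ν).skew_product hΨ (ae_of_all _ fun v => (hΨμ v).map_eq))

theorem integral_integral_comp_eq [SFinite μ] {ν : Measure V} [IsProbabilityMeasure ν]
    (hΨ : Measurable (uncurry Ψ)) (hΨμ : ∀ v, MeasurePreserving (Ψ v) μ μ) {F : α → ℝ}
    (hF : Integrable F μ) : ∫ p, ∫ v, F (Ψ v p) ∂ν ∂μ = ∫ p, F p ∂μ := by
  have hΨ' := measurePreserving_uncurry (ν := ν) hΨ hΨμ
  calc ∫ p, ∫ v, F (Ψ v p) ∂ν ∂μ = ∫ q, F (uncurry Ψ q) ∂ν.prod μ :=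
        (integral_prod_symm _ (hΨ'.integrable_comp_of_integrable hF)).symm
    _ = ∫ p, F p ∂(Measure.map (uncurry Ψ) (ν.prod μ)) :=
        (integral_map hΨ'.aemeasurable (by rw [hΨ'.map_eq]; exact hF.1)).symm
    _ = ∫ p, F p ∂μ := by rw [hΨ'.map_eq]

theorem integral_eq_of_ae_tendsto_integral_comp [IsFiniteMeasure μ] {ν : ℕ → Measure V}
    [∀ n, IsProbabilityMeasure (ν n)] (hΨ : Measurable (uncurry Ψ))
    (hΨμ : ∀ v, MeasurePreserving (Ψ v) μ μ) {F Fbar : α → ℝ} (hF : Integrable F μ)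
    (hconv : ∀ᵐ p ∂μ, Tendsto (fun n => ∫ v, F (Ψ v p) ∂ν n) atTop (𝓝 (Fbar p))) :
    ∫ p, Fbar p ∂μ = ∫ p, F p ∂μ := by
  have := nonempty_of_isProbabilityMeasure (ν 0)
  have hFΨ : ∀ n, Integrable (fun q : V × α => F (Ψ q.1 q.2)) ((ν n).prod μ) := fun n =>
    (measurePreserving_uncurry hΨ hΨμ).integrable_comp_of_integrable hF
  have hUI : UniformIntegrable (fun n p => ∫ v, F (Ψ v p) ∂ν n) 1 μ :=
    (uniformIntegrable_comp_measurePreserving hF hΨμ).integral_of_isProbabilityMeasure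
      fun n => (hFΨ n).1
  have hFbar : Integrable Fbar μ := hUI.integrable_of_ae_tendsto hconv
  have hL1 := tendsto_Lp_finite_of_tendsto_ae le_rfl ENNReal.one_ne_top hUI.1
    (memLp_one_iff_integrable.2 hFbar) hUI.2.1 hconv
  have hint := tendsto_integral_of_L1' Fbar hFbar.1
    (Eventually.of_forall fun n => (hFΨ n).integral_prod_right) hL1
  simp only [integral_integral_comp_eq hΨ hΨμ hF] at hint
  exact tendsto_nhds_unique hint tendsto_const_nhds

section TimeAverage

variable {E : Type*} [NormedAddCommGroup E] [NormedSpace ℝ E]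

theorem integral_prod_prod {β γ δ : Type*} [MeasurableSpace β] [MeasurableSpace γ]
    [MeasurableSpace δ] {μ₁ : Measure β} {μ₂ : Measure γ} {μ₃ : Measure δ} [SFinite μ₁]
    [SFinite μ₂] [SFinite μ₃] {G : β × γ × δ → E} (hG : Integrable G (μ₁.prod (μ₂.prod μ₃))) :
    ∫ v, G v ∂μ₁.prod (μ₂.prod μ₃) = ∫ s, ∫ t, ∫ u, G (s, t, u) ∂μ₃ ∂μ₂ ∂μ₁ := by
  rw [integral_prod _ hG]
  refine integral_congr_ae ?_
  filter_upwards [hG.prod_right_ae] with s hs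
  exact integral_prod _ hs

theorem integral_cond_Ioc (f : ℝ → E) {T : ℝ} (hT : 0 < T) :
    ∫ s, f s ∂volume[|Ioc 0 T] = T⁻¹ • ∫ s in 0..T, f s := by
  rw [ProbabilityTheory.cond, integral_smul_measure, intervalIntegral.integral_of_le hT.le,
    Real.volume_Ioc, sub_zero, ENNReal.toReal_inv, ENNReal.toReal_ofReal hT.le]

noncomputable def uniformCube (T : ℝ) : Measure (ℝ × ℝ × ℝ) :=
  (volume[|Ioc 0 T]).prod ((volume[|Ioc 0 T]).prod volume[|Ioc 0 T])

theorem isProbabilityMeasure_cond_Ioc {T : ℝ} (hT : 0 < T) :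
    IsProbabilityMeasure (volume[|Ioc (0 : ℝ) T]) :=
  cond_isProbabilityMeasure_of_finite (by simp [hT]) (by simp)

theorem isProbabilityMeasure_uniformCube {T : ℝ} (hT : 0 < T) :
    IsProbabilityMeasure (uniformCube T) := by
  have := isProbabilityMeasure_cond_Ioc hT
  unfold uniformCube
  infer_instance

theorem integral_uniformCube {T : ℝ} (hT : 0 < T) {G : ℝ × ℝ × ℝ → E}
    (hG : Integrable G (uniformCube T)) :
    ∫ v, G v ∂uniformCube T = (T ^ 3)⁻¹ • ∫ s in 0..T, ∫ t in 0..T, ∫ u in 0..T, G (s, t, u) := by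
  rw [uniformCube, integral_prod_prod hG]
  simp only [integral_cond_Ioc _ hT, intervalIntegral.integral_smul, smul_smul]
  congr 1
  ring

end TimeAverage

end MeasureTheory

theorem ergodic_time_average_integral_eq_general
    {T₁ T₂ T₃ : Type*} [MeasurableSpace T₁] [MeasurableSpace T₂] [MeasurableSpace T₃]
    (μ₁ : Measure T₁) (μ₂ : Measure T₂) (μ₃ : Measure T₃)
    [IsFiniteMeasure μ₁] [IsFiniteMeasure μ₂] [IsFiniteMeasure μ₃]
    (Φ₁ : ℝ → T₁ → T₁) (Φ₂ : ℝ → T₂ → T₂) (Φ₃ : ℝ → T₃ → T₃)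
    (hΦ₁ : Measurable fun p : ℝ × T₁ => Φ₁ p.1 p.2)
    (hΦ₂ : Measurable fun p : ℝ × T₂ => Φ₂ p.1 p.2)
    (hΦ₃ : Measurable fun p : ℝ × T₃ => Φ₃ p.1 p.2)
    (hΦ₁pres : ∀ t : ℝ, MeasurePreserving (Φ₁ t) μ₁ μ₁)
    (hΦ₂pres : ∀ t : ℝ, MeasurePreserving (Φ₂ t) μ₂ μ₂)
    (hΦ₃pres : ∀ t : ℝ, MeasurePreserving (Φ₃ t) μ₃ μ₃)
    (F : T₁ × T₂ × T₃ → ℝ)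
    (hF : Integrable F (μ₁.prod (μ₂.prod μ₃)))
    (Fbar : T₁ × T₂ × T₃ → ℝ)
    (hconv : ∀ᵐ p ∂(μ₁.prod (μ₂.prod μ₃)),
      Tendsto (fun T : ℝ =>
          (1 / T ^ 3) * ∫ s in (0:ℝ)..T, ∫ t in (0:ℝ)..T, ∫ u in (0:ℝ)..T,
            F (Φ₁ s p.1, Φ₂ t p.2.1, Φ₃ u p.2.2))
        atTop (nhds (Fbar p))) :
    (∫ p, Fbar p ∂(μ₁.prod (μ₂.prod μ₃))) = ∫ p, F p ∂(μ₁.prod (μ₂.prod μ₃)) := by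
  let Ψ : ℝ × ℝ × ℝ → T₁ × T₂ × T₃ → T₁ × T₂ × T₃ :=
    fun v => Prod.map (Φ₁ v.1) (Prod.map (Φ₂ v.2.1) (Φ₃ v.2.2))
  have hΨ : Measurable (uncurry Ψ) :=
    (hΦ₁.comp (measurable_fst.fst.prodMk measurable_snd.fst)).prodMk
      ((hΦ₂.comp (measurable_fst.snd.fst.prodMk measurable_snd.snd.fst)).prodMk
        (hΦ₃.comp (measurable_fst.snd.snd.prodMk measurable_snd.snd.snd)))
  have hΨμ : ∀ v, MeasurePreserving (Ψ v) _ _ := fun v =>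
    (hΦ₁pres v.1).prod ((hΦ₂pres v.2.1).prod (hΦ₃pres v.2.2))
  have hT : ∀ n : ℕ, (0 : ℝ) < n + 1 := fun n => n.cast_add_one_pos
  have := fun n => isProbabilityMeasure_uniformCube (hT n)
  refine integral_eq_of_ae_tendsto_integral_comp (ν := fun n => uniformCube (n + 1)) hΨ hΨμ hF ?_
  have hslice : ∀ᵐ p ∂(μ₁.prod (μ₂.prod μ₃)), ∀ n : ℕ,
      Integrable (fun v => F (Ψ v p)) (uniformCube (n + 1)) :=
    ae_all_iff.2 fun n =>
      ((measurePreserving_uncurry hΨ hΨμ).integrable_comp_of_integrable hF).prod_left_ae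
  filter_upwards [hconv, hslice] with p hp hsl
  refine (hp.comp (tendsto_atTop_add_const_right _ 1 tendsto_natCast_atTop_atTop)).congr
    fun n => ?_
  rw [integral_uniformCube (hT n) (hsl n), smul_eq_mul, comp_apply, one_div]
  rfl

/-- **L¹-Ergodic theorem, part (d).** If the triple time averages of `F` converge a.e. to a
measurable function `F̄`, then (the total measure being finite) `∫ F̄ dμ = ∫ F dμ`. -/
theorem ergodic_time_average_integral_eq
    {T₁ T₂ T₃ : Type*} [MeasurableSpace T₁] [MeasurableSpace T₂] [MeasurableSpace T₃]
    (μ₁ : Measure T₁) (μ₂ : Measure T₂) (μ₃ : Measure T₃)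
    [IsFiniteMeasure μ₁] [IsFiniteMeasure μ₂] [IsFiniteMeasure μ₃]
    (Φ₁ : ℝ → T₁ → T₁) (Φ₂ : ℝ → T₂ → T₂) (Φ₃ : ℝ → T₃ → T₃)
    (hΦ₁ : Measurable fun p : ℝ × T₁ => Φ₁ p.1 p.2)
    (hΦ₂ : Measurable fun p : ℝ × T₂ => Φ₂ p.1 p.2)
    (hΦ₃ : Measurable fun p : ℝ × T₃ => Φ₃ p.1 p.2)
    (hΦ₁0 : ∀ x, Φ₁ 0 x = x) (hΦ₂0 : ∀ y, Φ₂ 0 y = y) (hΦ₃0 : ∀ z, Φ₃ 0 z = z)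
    (hΦ₁add : ∀ s t x, Φ₁ (s + t) x = Φ₁ s (Φ₁ t x))
    (hΦ₂add : ∀ s t y, Φ₂ (s + t) y = Φ₂ s (Φ₂ t y))
    (hΦ₃add : ∀ s t z, Φ₃ (s + t) z = Φ₃ s (Φ₃ t z))
    (hΦ₁pres : ∀ t : ℝ, MeasurePreserving (Φ₁ t) μ₁ μ₁)
    (hΦ₂pres : ∀ t : ℝ, MeasurePreserving (Φ₂ t) μ₂ μ₂)
    (hΦ₃pres : ∀ t : ℝ, MeasurePreserving (Φ₃ t) μ₃ μ₃)
    (F : T₁ × T₂ × T₃ → ℝ)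
    (hF : Integrable F (μ₁.prod (μ₂.prod μ₃)))
    (Fbar : T₁ × T₂ × T₃ → ℝ) (hFbar : Measurable Fbar)
    (hconv : ∀ᵐ p ∂(μ₁.prod (μ₂.prod μ₃)),
      Tendsto (fun T : ℝ =>
          (1 / T ^ 3) * ∫ s in (0:ℝ)..T, ∫ t in (0:ℝ)..T, ∫ u in (0:ℝ)..T,
            F (Φ₁ s p.1, Φ₂ t p.2.1, Φ₃ u p.2.2))
        atTop (nhds (Fbar p))) :
    (∫ p, Fbar p ∂(μ₁.prod (μ₂.prod μ₃))) = ∫ p, F p ∂(μ₁.prod (μ₂.prod μ₃)) :=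
  ergodic_time_average_integral_eq_general μ₁ μ₂ μ₃ Φ₁ Φ₂ Φ₃ hΦ₁ hΦ₂ hΦ₃ hΦ₁pres hΦ₂pres hΦ₃pres F
    hF Fbar hconv
end

section
/- The continuous maps f, g : S² → Conf₃(ℝ³) defined by f(ξ) = (q₁, q₂ + ξ, q₂) and g(ξ) = (q₁, q₂, q₂ − ξ) are well defined (their values are triples of pairwise distinct points) and are homotopic as continuous maps into Conf₃(ℝ³). -/
open Metric

noncomputable section

abbrev E3 : Type := EuclideanSpace ℝ (Fin 3)

/-- `e = (1,0,0) ∈ ℝ³`. -/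
def e : E3 := EuclideanSpace.single (0 : Fin 3) (1 : ℝ)

def q1 : E3 := 0
def q2 : E3 := (4 : ℝ) • e
def q3 : E3 := (8 : ℝ) • e

/-- The configuration space `Conf₃(ℝ³)` of 3 (ordered, pairwise distinct) points in `ℝ³`,
with the subspace topology. -/
abbrev Conf3 : Type :=
  {p : E3 × E3 × E3 // p.1 ≠ p.2.1 ∧ p.1 ≠ p.2.2 ∧ p.2.1 ≠ p.2.2}

/-- The configuration space `Conf₂(ℝ³)`. -/
abbrev Conf2 : Type := {p : E3 × E3 // p.1 ≠ p.2}

/-- The unit sphere `S² ⊂ ℝ³`. -/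
abbrev S2 : Type := sphere (0 : E3) 1

lemma norm_q2 : ‖q2‖ = 4 := by
  have he : ‖e‖ = 1 := by simp [e]
  rw [q2, norm_smul, he]; norm_num

lemma aux_ne_zero (s : ℝ) (hs : |s| ≤ 1) (ξ : S2) : (0 : E3) ≠ q2 + s • (ξ : E3) := by
  intro h
  have hξ : ‖(ξ : E3)‖ = 1 := mem_sphere_zero_iff_norm.mp ξ.2
  have hq : q2 = -(s • (ξ : E3)) := by
    rw [eq_neg_iff_add_eq_zero]; exact h.symm
  have : ‖q2‖ = |s| := by rw [hq, norm_neg, norm_smul, hξ]; simp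
  rw [norm_q2] at this
  linarith [abs_nonneg s]

lemma aux_ne (s t : ℝ) (hst : s ≠ t) (ξ : S2) :
    q2 + s • (ξ : E3) ≠ q2 + t • (ξ : E3) := by
  intro h
  have hξ : ‖(ξ : E3)‖ = 1 := mem_sphere_zero_iff_norm.mp ξ.2
  have h2 : s • (ξ : E3) = t • (ξ : E3) := by
    have := add_left_cancel h
    exact this
  have hne : (ξ : E3) ≠ 0 := by
    intro h0; rw [h0] at hξ; simp at hξ
  exact hst (smul_left_injective ℝ hne h2)

/-- The spherical cycles `ξ ↦ (q₁, q₂ + ξ, q₂)` and `ξ ↦ (q₁, q₂, q₂ − ξ)` are well defined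
maps `S² → Conf₃(ℝ³)` and are homotopic (i.e. `(2,3)·A₃₂ ≃ −A₃₂`). -/
theorem cycles_homotopic_A32 :
    ∃ f g : C(S2, Conf3),
      (∀ ξ : S2, (f ξ : E3 × E3 × E3) = (q1, q2 + (ξ : E3), q2)) ∧
      (∀ ξ : S2, (g ξ : E3 × E3 × E3) = (q1, q2, q2 - (ξ : E3))) ∧
      f.Homotopic g := by
  have mem : ∀ (t : ℝ), 0 ≤ t → t ≤ 1 → ∀ ξ : S2,
      q1 ≠ q2 + (1 - t) • (ξ : E3) ∧ q1 ≠ q2 + (-t) • (ξ : E3) ∧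
        q2 + (1 - t) • (ξ : E3) ≠ q2 + (-t) • (ξ : E3) := by
    intro t h0 h1 ξ
    refine ⟨aux_ne_zero _ ?_ ξ, aux_ne_zero _ ?_ ξ, aux_ne _ _ ?_ ξ⟩
    · rw [abs_le]; constructor <;> linarith
    · rw [abs_le]; constructor <;> linarith
    · intro h; linarith
  have hF : Continuous (fun p : ℝ × S2 =>
      ((q1, q2 + (1 - p.1) • (p.2 : E3), q2 + (-p.1) • (p.2 : E3)) : E3 × E3 × E3)) := by
    fun_prop
  refine ⟨⟨fun ξ => ⟨(q1, q2 + (ξ : E3), q2), ?_⟩, ?_⟩,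
          ⟨fun ξ => ⟨(q1, q2, q2 - (ξ : E3)), ?_⟩, ?_⟩, fun ξ => rfl, fun ξ => rfl, ?_⟩
  · have := mem 0 le_rfl zero_le_one ξ
    simpa using this
  · exact Continuous.subtype_mk (by fun_prop) _
  · have := mem 1 zero_le_one le_rfl ξ
    simpa [sub_eq_add_neg] using this
  · exact Continuous.subtype_mk (by fun_prop) _
  · refine ⟨⟨⟨fun p => ⟨(q1, q2 + (1 - (p.1 : ℝ)) • (p.2 : E3), q2 + (-(p.1 : ℝ)) • (p.2 : E3)),
        mem _ p.1.2.1 p.1.2.2 p.2⟩, ?_⟩, ?_, ?_⟩⟩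
    · apply Continuous.subtype_mk
      exact hF.comp ((continuous_subtype_val.comp continuous_fst).prodMk continuous_snd)
    · intro ξ
      apply Subtype.ext
      simp
    · intro ξ
      apply Subtype.ext
      simp [sub_eq_add_neg]
end
end

section
/- The configuration space Conf₃(ℝ³) is simply connected: it is path-connected and its fundamental group (at any basepoint) is trivial. -/
/-
The fat diagonal of `(ℝ³)³` is a union of three linear subspaces of codimension 3, so it is
enough to show that the complement `U` of finitely many subspaces `Wᵢ` of codimension `≥ 3` in a
finite-dimensional space is simply connected. A loop in `U` is straight-line homotopic to a nearby
polygonal loop bent by `t (1 - t) • u`, and the straight-line contraction of this loop to its base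
point is a piecewise smooth two-parameter family. The vectors `u` for which this family meets `Wᵢ`
form a set of Hausdorff dimension at most `2 + dim Wᵢ < dim V`, so for a generic small `u` the
contraction stays in `U`. Path-connectedness is the same argument with one parameter.
-/

open Metric

noncomputable section

open Set Module Filter Topology
open scoped unitInterval

variable {V : Type*} [NormedAddCommGroup V] [NormedSpace ℝ V]

theorem dense_setOf_forall_add_smul_notMem [FiniteDimensional ℝ V] {E ι κ : Type*}
    [NormedAddCommGroup E] [NormedSpace ℝ E] [FiniteDimensional ℝ E] [Countable ι] [Countable κ]
    (W : ι → Submodule ℝ V) (hW : ∀ i, finrank ℝ E + finrank ℝ (W i) < finrank ℝ V)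
    {P : Set E} (hP : Convex ℝ P) {c : κ → E → V} (hc : ∀ k, ContDiff ℝ 1 (c k))
    {τ : E → ℝ} (hτ : ContDiff ℝ 1 τ) (hτP : ∀ p ∈ P, τ p ≠ 0) :
    Dense {u : V | ∀ k, ∀ p ∈ P, ∀ i, c k p + τ p • u ∉ W i} := by
  rcases isEmpty_or_nonempty ι with hι | ⟨⟨i₀⟩⟩
  · simp
  -- `c k p + τ p • u = w ∈ W i` iff `u = (τ p)⁻¹ • (w - c k p)`, a smooth image of `(p, w)`
  let bad (ki : κ × ι) : Set V :=
    (fun z : E × W ki.2 => (τ z.1)⁻¹ • ((z.2 : V) - c ki.1 z.1)) '' (P ×ˢ univ)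
  have hbad (ki : κ × ι) : dimH (bad ki) ≤ (finrank ℝ V - 1 : ℕ) := by
    have hsmooth : ContDiffOn ℝ 1 (fun z : E × W ki.2 => (τ z.1)⁻¹ • ((z.2 : V) - c ki.1 z.1))
        (P ×ˢ univ) :=
      ((hτ.comp contDiff_fst).contDiffOn.inv fun z hz => hτP z.1 hz.1).smul
        (((W ki.2).subtypeL.contDiff.comp contDiff_snd).sub
          ((hc ki.1).comp contDiff_fst)).contDiffOn
    calc dimH (bad ki) ≤ dimH (P ×ˢ (univ : Set (W ki.2))) :=
          hsmooth.dimH_image_le (hP.prod convex_univ) Subset.rfl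
      _ ≤ dimH (univ : Set (E × W ki.2)) := dimH_mono (subset_univ _)
      _ = finrank ℝ (E × W ki.2) := Real.dimH_univ_eq_finrank _
      _ ≤ (finrank ℝ V - 1 : ℕ) := by
          have := hW ki.2
          rw [finrank_prod]
          exact_mod_cast (by omega)
  have hdim : dimH (⋃ ki, bad ki) < finrank ℝ V := by
    rw [dimH_iUnion]
    refine (iSup_le hbad).trans_lt ?_
    have := hW i₀
    exact_mod_cast (by omega)
  refine (dense_compl_of_dimH_lt_finrank hdim).mono
    fun u (hu : u ∉ ⋃ ki, bad ki) k p hp i hmem => hu ?_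
  refine mem_iUnion.2 ⟨(k, i), (p, ⟨_, hmem⟩), ⟨hp, trivial⟩, ?_⟩
  simp [inv_smul_smul₀ (hτP p hp)]

theorem sum_range_projIcc_smul {M : Type*} [AddCommGroup M] [Module ℝ M] {n k : ℕ} (hk : k < n)
    {x : ℝ} (hkx : k ≤ x) (hxk : x ≤ k + 1) (d : ℕ → M) :
    ∑ j ∈ Finset.range n, (projIcc (0 : ℝ) 1 zero_le_one (x - j) : ℝ) • d j =
      ∑ j ∈ Finset.range k, d j + (x - k) • d k := by
  induction n, hk using Nat.le_induction with
  | base =>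
    rw [Finset.sum_range_succ, projIcc_of_mem _ ⟨by linarith, by linarith⟩]
    congr 1
    refine Finset.sum_congr rfl fun j hj => ?_
    have : (j : ℝ) + 1 ≤ k := by exact_mod_cast Finset.mem_range.1 hj
    rw [projIcc_of_right_le _ (by linarith), one_smul]
  | succ n hkn ih =>
    have : (k : ℝ) + 1 ≤ n := by exact_mod_cast hkn
    rw [Finset.sum_range_succ, ih, projIcc_of_le_left _ (by linarith), zero_smul, add_zero]

/-- The polygon through the points `γ (k / n)`, `k = 0, …, n`: the `k`-th summand grows
linearly from `0` to `γ ((k + 1) / n) - γ (k / n)` while `t` runs through `[k / n, (k + 1) / n]`. -/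
def polygonalApprox (n : ℕ) (γ : ℝ → V) (t : ℝ) : V :=
  γ 0 + ∑ k ∈ Finset.range n,
    (projIcc (0 : ℝ) 1 zero_le_one (n * t - k) : ℝ) • (γ ((k + 1 : ℕ) / n) - γ (k / n))

@[fun_prop]
theorem continuous_polygonalApprox (n : ℕ) (γ : ℝ → V) : Continuous (polygonalApprox n γ) := by
  unfold polygonalApprox
  fun_prop

theorem polygonalApprox_zero (n : ℕ) (γ : ℝ → V) : polygonalApprox n γ 0 = γ 0 := by
  simp [polygonalApprox, projIcc_of_le_left]

theorem polygonalApprox_one {n : ℕ} (hn : n ≠ 0) (γ : ℝ → V) : polygonalApprox n γ 1 = γ 1 := by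
  have hterm : ∀ k ∈ Finset.range n, (projIcc (0 : ℝ) 1 zero_le_one (n * 1 - k) : ℝ) = 1 := by
    intro k hk
    have : (k : ℝ) + 1 ≤ n := by exact_mod_cast Finset.mem_range.1 hk
    rw [projIcc_of_right_le _ (by linarith)]
  rw [polygonalApprox, Finset.sum_congr rfl fun k hk => by rw [hterm k hk, one_smul],
    Finset.sum_range_sub (fun k : ℕ => γ (k / n)), div_self (Nat.cast_ne_zero.2 hn)]
  simp

theorem exists_polygonalApprox_eq {n : ℕ} (hn : n ≠ 0) (γ : ℝ → V) {t : ℝ} (ht : t ∈ I) :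
    ∃ k : ℕ, k < n ∧ (k : ℝ) ≤ n * t ∧ n * t ≤ k + 1 ∧
      polygonalApprox n γ t = γ (k / n) + (n * t - k) • (γ ((k + 1 : ℕ) / n) - γ (k / n)) := by
  have hnt : 0 ≤ (n : ℝ) * t := mul_nonneg n.cast_nonneg ht.1
  have hnt' : (n : ℝ) * t ≤ n := mul_le_of_le_one_right n.cast_nonneg ht.2
  set k := min ⌊(n : ℝ) * t⌋₊ (n - 1) with hk_def
  have hkn : k < n := by omega
  have hk : (k : ℝ) ≤ n * t := (Nat.cast_le.2 (min_le_left _ _)).trans (Nat.floor_le hnt)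
  have hk' : n * t ≤ (k : ℝ) + 1 := by
    rcases le_total ⌊(n : ℝ) * t⌋₊ (n - 1) with h | h
    · rw [hk_def, min_eq_left h]; exact (Nat.lt_floor_add_one _).le
    · rw [hk_def, min_eq_right h, Nat.cast_sub (Nat.one_le_iff_ne_zero.2 hn)]; simpa using hnt'
  refine ⟨k, hkn, hk, hk', ?_⟩
  rw [polygonalApprox, sum_range_projIcc_smul hkn hk hk',
    Finset.sum_range_sub (fun j : ℕ => γ (j / n))]
  simp only [Nat.cast_zero, zero_div]
  abel

theorem eventually_dist_polygonalApprox_lt {γ : ℝ → V} (hγ : ContinuousOn γ I) {ε : ℝ}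
    (hε : 0 < ε) : ∀ᶠ n : ℕ in atTop, ∀ t ∈ I, dist (polygonalApprox n γ t) (γ t) < ε := by
  obtain ⟨η, hη, hγη⟩ := Metric.uniformContinuousOn_iff.1
    (isCompact_Icc.uniformContinuousOn_of_continuous hγ) (ε / 2) (half_pos hε)
  obtain ⟨N, hN⟩ := exists_nat_one_div_lt hη
  filter_upwards [eventually_gt_atTop N] with n hNn t ht
  have hn : (0 : ℝ) < n := by exact_mod_cast (N.zero_le.trans_lt hNn)
  have hmesh : 1 / (n : ℝ) < η := by
    refine lt_of_le_of_lt (one_div_le_one_div_of_le (by positivity) ?_) hN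
    exact_mod_cast hNn
  obtain ⟨k, hkn, hk, hk', heq⟩ := exists_polygonalApprox_eq (Nat.cast_pos.1 hn).ne' γ ht
  have hkn' : (k : ℝ) + 1 ≤ n := by exact_mod_cast hkn
  have hk_mem : (k : ℝ) / n ∈ I :=
    ⟨by positivity, (div_le_one hn).2 (by linarith)⟩
  have hk1_mem : ((k + 1 : ℕ) : ℝ) / n ∈ I :=
    ⟨by positivity, (div_le_one hn).2 (by push_cast; linarith)⟩
  have hstep : dist (γ ((k + 1 : ℕ) / n)) (γ (k / n)) < ε / 2 := by
    refine hγη _ hk1_mem _ hk_mem ?_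
    rw [Real.dist_eq, ← sub_div, Nat.cast_succ, add_sub_cancel_left, abs_of_pos (by positivity)]
    exact hmesh
  have hnear : dist (γ (k / n)) (γ t) < ε / 2 := by
    refine hγη _ hk_mem _ ht (lt_of_le_of_lt ?_ hmesh)
    have hdiff : (k : ℝ) / n - t = (k - n * t) / n := by field_simp
    rw [Real.dist_eq, hdiff, abs_div, abs_of_pos hn]
    gcongr
    rw [abs_le]; constructor <;> linarith
  have hfrac : ‖(n * t - k : ℝ)‖ ≤ 1 := by
    rw [Real.norm_eq_abs, abs_le]; constructor <;> linarith
  calc dist (polygonalApprox n γ t) (γ t)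
      ≤ dist (polygonalApprox n γ t) (γ (k / n)) + dist (γ (k / n)) (γ t) := dist_triangle _ _ _
    _ ≤ dist (γ ((k + 1 : ℕ) / n)) (γ (k / n)) + dist (γ (k / n)) (γ t) := by
        gcongr
        rw [heq, dist_eq_norm, add_sub_cancel_left, norm_smul, dist_eq_norm]
        exact mul_le_of_le_one_left (norm_nonneg _) hfrac
    _ < ε / 2 + ε / 2 := add_lt_add hstep hnear
    _ = ε := add_halves ε

def Path.codRestrict {X : Type*} [TopologicalSpace X] {U : Set X} {x y : U} (γ : Path (x : X) y)
    (h : ∀ t, γ t ∈ U) : Path x y where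
  toFun t := ⟨γ t, h t⟩
  continuous_toFun := γ.continuous.subtype_mk _
  source' := Subtype.ext γ.source
  target' := Subtype.ext γ.target

theorem Path.homotopic_of_segment_subset {U : Set V} {x y : U} {p q : Path x y}
    (h : ∀ t, segment ℝ (p t : V) (q t) ⊆ U) : p.Homotopic q :=
  ⟨{ toFun := fun st => ⟨(1 - st.1 : ℝ) • (p st.2 : V) + (st.1 : ℝ) • (q st.2 : V),
        h st.2 ⟨1 - st.1, st.1, by linarith [st.1.2.2], st.1.2.1, by ring, rfl⟩⟩
     continuous_toFun := by fun_prop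
     map_zero_left := fun t => by simp
     map_one_left := fun t => by simp
     prop' := by
       rintro s t (rfl | rfl) <;> ext <;> simp [← add_smul] }⟩

theorem Path.exists_pos_forall_dist_lt_homotopic {U : Set V} {x y : U} (p : Path x y)
    (hU : IsOpen U) : ∃ δ > 0, ∀ f : Path (x : V) y, (∀ t, dist (f t) (p t) < δ) →
      ∃ q : Path x y, (∀ t, (q t : V) = f t) ∧ p.Homotopic q := by
  obtain ⟨δ, hδ, hδU⟩ := IsCompact.exists_thickening_subset_open
    (isCompact_range (continuous_subtype_val.comp p.continuous)) hU
    (range_subset_iff.2 fun t => (p t).2)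
  have hball (t : I) : ball (p t : V) δ ⊆ U :=
    (ball_subset_thickening (mem_range_self t) δ).trans hδU
  refine ⟨δ, hδ, fun f hf => ⟨f.codRestrict fun t => hball t (hf t), fun _ => rfl, ?_⟩⟩
  exact Path.homotopic_of_segment_subset fun t =>
    ((convex_ball _ _).segment_subset (mem_ball_self hδ) (hf t)).trans (hball t)

theorem exists_norm_lt_cone_polygonalApprox_notMem [FiniteDimensional ℝ V] {ι : Type*}
    [Countable ι] (W : ι → Submodule ℝ V) (hW : ∀ i, finrank ℝ (W i) + 3 ≤ finrank ℝ V)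
    {n : ℕ} (hn : n ≠ 0) (g : ℝ → V) (x : V) {ε : ℝ} (hε : 0 < ε) :
    ∃ u : V, ‖u‖ < ε ∧ ∀ t ∈ Ioo (0 : ℝ) 1, ∀ θ < (1 : ℝ), ∀ i,
      (1 - θ) • (polygonalApprox n g t + (t * (1 - t)) • u) + θ • x ∉ W i := by
  -- on `[k / n, (k + 1) / n]` the polygon is the affine map inside `c k`
  have hdense := dense_setOf_forall_add_smul_notMem (E := ℝ × ℝ) (κ := ℕ) W
    (fun i => by rw [finrank_prod, finrank_self]; linarith [hW i])
    ((convex_Iio 1).prod (convex_Ioo 0 1))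
    (c := fun k p =>
      (1 - p.1) • (g (k / n) + (n * p.2 - k) • (g ((k + 1 : ℕ) / n) - g (k / n))) + p.1 • x)
    (fun k => by fun_prop) (τ := fun p => (1 - p.1) * (p.2 * (1 - p.2))) (by fun_prop)
    fun p ⟨hθ, ht⟩ => mul_ne_zero (sub_ne_zero.2 (ne_of_gt hθ))
      (mul_ne_zero ht.1.ne' (sub_ne_zero.2 ht.2.ne'))
  obtain ⟨u, hu, hsmall⟩ := hdense.exists_mem_open isOpen_ball ⟨0, mem_ball_self hε⟩
  refine ⟨u, mem_ball_zero_iff.1 hsmall, fun t ht θ hθ i => ?_⟩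
  obtain ⟨k, -, -, -, heq⟩ := exists_polygonalApprox_eq hn g (Ioo_subset_Icc_self ht)
  rw [heq]
  convert hu k (θ, t) ⟨hθ, ht⟩ i using 2
  module

section ComplementOfSubspaces

variable [FiniteDimensional ℝ V] {ι : Type*} (W : ι → Submodule ℝ V)

theorem isPathConnected_compl_iUnion_submodule [Countable ι]
    (hW : ∀ i, finrank ℝ (W i) + 2 ≤ finrank ℝ V) :
    IsPathConnected (⋃ i, (W i : Set V))ᶜ := by
  have hdim : ∀ i, finrank ℝ ℝ + finrank ℝ (W i) < finrank ℝ V := fun i => by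
    rw [finrank_self]; linarith [hW i]
  obtain ⟨u₀, hu₀⟩ := (dense_setOf_forall_add_smul_notMem (κ := Unit) W hdim convex_univ
    (c := fun _ _ => 0) (fun _ => contDiff_const) (τ := fun _ => 1) contDiff_const
    (fun _ _ => one_ne_zero)).nonempty
  refine isPathConnected_iff.2 ⟨⟨u₀, ?_⟩, fun a ha b hb => ?_⟩
  · simpa using fun i => hu₀ () 0 trivial i
  -- the segment from `a` to `b`, bent by a generic `u` off every `W i`
  obtain ⟨u, hu⟩ := (dense_setOf_forall_add_smul_notMem (κ := Unit) W hdim (convex_Ioo 0 1)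
    (c := fun _ t => (1 - t) • a + t • b) (fun _ => by fun_prop) (τ := fun t => t * (1 - t))
    (by fun_prop) (fun t ht => mul_ne_zero ht.1.ne' (sub_ne_zero.2 ht.2.ne'))).nonempty
  refine ⟨Path.ofLine (f := fun t => (1 - t) • a + t • b + (t * (1 - t)) • u) (by fun_prop)
    (by simp) (by simp), fun ⟨t, ht⟩ => ?_⟩
  rcases ht.1.eq_or_lt with rfl | ht₀
  · simpa using ha
  rcases ht.2.eq_or_lt with rfl | ht₁
  · simpa using hb
  simp only [mem_compl_iff, mem_iUnion, SetLike.mem_coe, not_exists]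
  exact hu () t ⟨ht₀, ht₁⟩

theorem Path.homotopic_refl_of_compl_iUnion_submodule [Finite ι]
    (hW : ∀ i, finrank ℝ (W i) + 3 ≤ finrank ℝ V) {x : ↥(⋃ i, (W i : Set V))ᶜ} (γ : Path x x) :
    γ.Homotopic (Path.refl x) := by
  obtain ⟨δ, hδ, hclose⟩ := γ.exists_pos_forall_dist_lt_homotopic
    (isClosed_iUnion_of_finite fun i => (W i).closed_of_finiteDimensional).isOpen_compl
  set g : ℝ → V := fun t => (γ.extend t : V)
  obtain ⟨n, hnδ, hn⟩ := ((eventually_dist_polygonalApprox_lt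
    (continuous_subtype_val.comp γ.continuous_extend).continuousOn (half_pos hδ)).and
    (eventually_ne_atTop 0)).exists
  obtain ⟨u, hu, hgen⟩ := exists_norm_lt_cone_polygonalApprox_notMem W hW hn g x (half_pos hδ)
  set f : ℝ → V := fun t => polygonalApprox n g t + (t * (1 - t)) • u
  have hfx (t : ℝ) (ht : t = 0 ∨ t = 1) : f t = x := by
    rcases ht with rfl | rfl
    · simp [f, polygonalApprox_zero, g]
    · simp [f, polygonalApprox_one hn, g]
  obtain ⟨γ', hγ'f, hγγ'⟩ := hclose (Path.ofLine (f := f) (by fun_prop) (hfx 0 (.inl rfl))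
    (hfx 1 (.inr rfl))) fun t => by
    have hτ : ‖(t * (1 - t) : ℝ)‖ ≤ 1 := by
      rw [Real.norm_eq_abs, abs_le]; constructor <;> nlinarith [t.2.1, t.2.2]
    calc dist (f t) (γ t)
        ≤ dist (f t) (polygonalApprox n g t) + dist (polygonalApprox n g t) (g t) := by
          simpa [g] using dist_triangle (f t) (polygonalApprox n g t) (γ t)
      _ < δ / 2 + δ / 2 := by
          refine add_lt_add_of_le_of_lt ?_ (hnδ t t.2)
          rw [dist_eq_norm, add_sub_cancel_left, norm_smul]
          exact (mul_le_of_le_one_left (norm_nonneg u) hτ).trans hu.le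
      _ = δ := add_halves δ
  refine hγγ'.trans (Path.homotopic_of_segment_subset fun t => ?_)
  rintro z ⟨a, θ, ha, -, hab, rfl⟩
  obtain rfl : a = 1 - θ := by linarith
  rcases (sub_nonneg.1 ha).eq_or_lt with rfl | hθ₁
  · simpa using x.2
  by_cases ht : (t : ℝ) = 0 ∨ (t : ℝ) = 1
  · simpa [(hγ'f t).trans (hfx t ht), ← add_smul] using x.2
  rw [not_or] at ht
  simp only [hγ'f, Path.refl_apply, mem_compl_iff, mem_iUnion, SetLike.mem_coe, not_exists]
  exact hgen t ⟨t.2.1.lt_of_ne' ht.1, t.2.2.lt_of_ne ht.2⟩ θ hθ₁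

theorem simplyConnectedSpace_compl_iUnion_submodule [Finite ι]
    (hW : ∀ i, finrank ℝ (W i) + 3 ≤ finrank ℝ V) :
    SimplyConnectedSpace ↥(⋃ i, (W i : Set V))ᶜ :=
  simply_connected_iff_loops_nullhomotopic.2
    ⟨isPathConnected_iff_pathConnectedSpace.1 <|
      isPathConnected_compl_iUnion_submodule W fun i => by linarith [hW i],
    fun _ γ => Path.homotopic_refl_of_compl_iUnion_submodule W hW γ⟩

end ComplementOfSubspaces

theorem LinearMap.finrank_ker_add_of_surjective {M : Type*} [AddCommGroup M] [Module ℝ M]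
    [FiniteDimensional ℝ V] {f : V →ₗ[ℝ] M} (hf : Function.Surjective f) :
    finrank ℝ (LinearMap.ker f) + finrank ℝ M = finrank ℝ V := by
  rw [← f.finrank_range_add_finrank_ker, LinearMap.range_eq_top.2 hf, finrank_top, add_comm]

section ThreePoints

variable (M : Type*) [NormedAddCommGroup M] [NormedSpace ℝ M]

def collisionSubmodule : Fin 3 → Submodule ℝ (M × M × M) :=
  ![LinearMap.ker (LinearMap.fst ℝ M (M × M) - LinearMap.fst ℝ M M ∘ₗ LinearMap.snd ℝ M (M × M)),
    LinearMap.ker (LinearMap.fst ℝ M (M × M) - LinearMap.snd ℝ M M ∘ₗ LinearMap.snd ℝ M (M × M)),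
    LinearMap.ker (LinearMap.fst ℝ M M ∘ₗ LinearMap.snd ℝ M (M × M) -
      LinearMap.snd ℝ M M ∘ₗ LinearMap.snd ℝ M (M × M))]

theorem compl_iUnion_collisionSubmodule :
    (⋃ i, (collisionSubmodule M i : Set (M × M × M)))ᶜ =
      {p | p.1 ≠ p.2.1 ∧ p.1 ≠ p.2.2 ∧ p.2.1 ≠ p.2.2} := by
  ext p
  simp [collisionSubmodule, Fin.forall_fin_succ, sub_eq_zero]

variable [FiniteDimensional ℝ M]

theorem finrank_collisionSubmodule_add (i : Fin 3) :
    finrank ℝ (collisionSubmodule M i) + finrank ℝ M = finrank ℝ (M × M × M) := by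
  fin_cases i <;> refine LinearMap.finrank_ker_add_of_surjective fun z => ?_
  · exact ⟨(z, 0, 0), by simp⟩
  · exact ⟨(z, 0, 0), by simp⟩
  · exact ⟨(0, z, 0), by simp⟩

variable {M} in
theorem simplyConnectedSpace_conf3 (hM : 3 ≤ finrank ℝ M) :
    SimplyConnectedSpace {p : M × M × M // p.1 ≠ p.2.1 ∧ p.1 ≠ p.2.2 ∧ p.2.1 ≠ p.2.2} := by
  have h := simplyConnectedSpace_compl_iUnion_submodule (collisionSubmodule M) fun i => by
    have := finrank_collisionSubmodule_add M i
    simp only [finrank_prod] at this ⊢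
    omega
  rw [compl_iUnion_collisionSubmodule] at h
  exact h

end ThreePoints

/-- `Conf₃(ℝ³)` is simply connected: it is path-connected and its fundamental group at any
basepoint is trivial. -/
theorem conf3_simply_connected :
    PathConnectedSpace Conf3 ∧
      ∀ x : Conf3, ∀ γ : FundamentalGroup Conf3 x, γ = 1 := by
  have : SimplyConnectedSpace Conf3 := simplyConnectedSpace_conf3 (by simp)
  exact ⟨inferInstance, fun _ _ => Subsingleton.elim _ _⟩
end
end

section
/- For every k ≥ 2 there is a group isomorphism π_k(Conf₃(ℝ³)) ≅ π_k(Conf₂(ℝ³)) × π_k(ℝ³ ∖ {q₁, q₂}), where the homotopy groups are taken at the basepoints (q₁, q₂, q₃), (q₁, q₂) and q₃ respectively. -/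
open Metric Topology

noncomputable section

lemma q1_ne_q2 : q1 ≠ q2 := by
  intro h
  have := congrFun (congrArg (fun v : E3 => (v : Fin 3 → ℝ)) h) 0
  simp [q1, q2, e, EuclideanSpace.single_apply] at this

lemma q1_ne_q3 : q1 ≠ q3 := by
  intro h
  have := congrFun (congrArg (fun v : E3 => (v : Fin 3 → ℝ)) h) 0
  simp [q1, q3, e, EuclideanSpace.single_apply] at this

lemma q2_ne_q3 : q2 ≠ q3 := by
  intro h
  have := congrFun (congrArg (fun v : E3 => (v : Fin 3 → ℝ)) h) 0
  simp [q2, q3, e, EuclideanSpace.single_apply] at this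

/-- The basepoint `(q₁, q₂, q₃) ∈ Conf₃(ℝ³)`. -/
def base3 : Conf3 := ⟨(q1, q2, q3), q1_ne_q2, q1_ne_q3, q2_ne_q3⟩

/-- The basepoint `(q₁, q₂) ∈ Conf₂(ℝ³)`. -/
def base2 : Conf2 := ⟨(q1, q2), q1_ne_q2⟩

/-- The fiber `ℝ³ ∖ {q₁, q₂}` of the fibration `Π₃ : Conf₃(ℝ³) → Conf₂(ℝ³)`. -/
abbrev Fib : Type := {x : E3 // x ≠ q1 ∧ x ≠ q2}

/-- The basepoint `q₃ ∈ ℝ³ ∖ {q₁, q₂}`. -/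
def baseF : Fib := ⟨q3, q1_ne_q3.symm, q2_ne_q3.symm⟩

/-!
Forgetting the third point is a fibration `p : Conf₃(ℝ³) → Conf₂(ℝ³)` with fibre
`ℝ³ ∖ {q₁, q₂}`: a homotopy of the first two points lifts by dragging the third point along with a
finger move supported near the two moving points, in time steps short enough that the pair moves
little compared to its separation. The section `s (x, y) = (x, y, 2y - x)` splits `p_*`, and
homotopy lifting gives `ker p_* = im i_*` for the fibre inclusion `i`. The map `i_*` is injective:
if `G` is a null-homotopy of `i ∘ g`, then `G` followed by `s ∘ p ∘ G` run backwards projects to a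
contractible family in `Conf₂`, and lifting the contraction yields a null-homotopy of `g` in the
fibre. Since `π_k` is abelian for `k ≥ 2`, the split exact sequence gives the product.
-/

open unitInterval Topology.Homotopy

namespace GenLoop

variable {N X Y : Type*} [TopologicalSpace X] [TopologicalSpace Y] {x : X} {y : Y}

def map (f : C(X, Y)) (hf : f x = y) (γ : Ω^ N X x) : Ω^ N Y y :=
  ⟨f.comp γ, fun t ht => by simp [GenLoop.boundary γ t ht, hf]⟩

@[simp]
theorem map_apply (f : C(X, Y)) (hf : f x = y) (γ : Ω^ N X x) (t : I^N) :
    map f hf γ t = f (γ t) := rfl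

theorem map_transAt [DecidableEq N] (f : C(X, Y)) (hf : f x = y) (i : N) (γ γ' : Ω^ N X x) :
    map f hf (transAt i γ γ') = transAt i (map f hf γ) (map f hf γ') := by
  ext t
  simp only [map_apply, transAt, coe_copy]
  split_ifs <;> rfl

theorem homotopic_of_continuousMap {γ γ' : Ω^ N X x} (L : C(I × I^N, X))
    (h₀ : ∀ a, L (0, a) = γ a) (h₁ : ∀ a, L (1, a) = γ' a)
    (hb : ∀ t, ∀ a ∈ Cube.boundary N, L (t, a) = x) : Homotopic γ γ' :=
  ⟨{ toContinuousMap := L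
     map_zero_left := h₀
     map_one_left := h₁
     prop' := fun t a ha => (hb t a ha).trans (GenLoop.boundary γ a ha).symm }⟩

end GenLoop

namespace HomotopyGroup

variable {N X Y : Type*} [DecidableEq N] [Nonempty N] [TopologicalSpace X] [TopologicalSpace Y]
  {x : X} {y : Y}

def map (f : C(X, Y)) (hf : f x = y) : HomotopyGroup N X x →* HomotopyGroup N Y y where
  toFun := Quotient.map (GenLoop.map f hf) fun _ _ h => h.comp_continuousMap f
  map_one' := congrArg _ (GenLoop.ext _ _ fun _ => hf)
  map_mul' a b := by
    induction a using Quotient.inductionOn with | _ γ =>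
    induction b using Quotient.inductionOn with | _ γ' =>
    let i := Classical.arbitrary N
    exact (congrArg _ (mul_spec (i := i))).trans
      ((congrArg _ (GenLoop.map_transAt f hf i γ' γ)).trans (mul_spec (i := i)).symm)

theorem map_map {Z : Type*} [TopologicalSpace Z] {z : Z} (f : C(X, Y)) (hf : f x = y)
    (g : C(Y, Z)) (hg : g y = z) (a : HomotopyGroup N X x) :
    map g hg (map f hf a) = map (g.comp f) (by simp [hf, hg]) a := by
  induction a using Quotient.inductionOn with | _ γ =>
  rfl

theorem map_eq_self (f : C(X, X)) (h : ∀ z, f z = z) (a : HomotopyGroup N X x) :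
    map f (h x) a = a := by
  induction a using Quotient.inductionOn with | _ γ =>
  exact congrArg _ (GenLoop.ext _ _ fun t => h (γ t))

theorem map_eq_one (f : C(X, Y)) (h : ∀ z, f z = y) (a : HomotopyGroup N X x) :
    map f (h x) a = 1 := by
  induction a using Quotient.inductionOn with | _ γ =>
  exact congrArg _ (GenLoop.ext _ _ fun t => h (γ t))

end HomotopyGroup

theorem MonoidHom.bijective_noncommCoprod_of_splitExact {E G N : Type*} [Group E] [Group G]
    [Group N] {p : E →* G} {s : G →* E} {i : N →* E} (hps : ∀ g, p (s g) = g)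
    (hi : Function.Injective i) (hexact : p.ker = i.range) (hcomm : ∀ g n, Commute (s g) (i n)) :
    Function.Bijective (s.noncommCoprod i hcomm) := by
  have hpi : ∀ n, p (i n) = 1 := fun n => hexact.ge ⟨n, rfl⟩
  refine ⟨(injective_iff_map_eq_one _).2 fun ⟨g, n⟩ h => ?_, fun e => ?_⟩
  · have hg : g = 1 := by simpa [hps, hpi] using congrArg p h
    subst hg
    simpa using hi (by simpa using h)
  · obtain ⟨n, hn⟩ : (s (p e))⁻¹ * e ∈ i.range := by
      rw [← hexact, MonoidHom.mem_ker, map_mul, map_inv, hps, inv_mul_cancel]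
    exact ⟨(p e, n), by simp [hn]⟩

section PointPush

variable {E : Type*} [NormedAddCommGroup E]

def pushWeight (r : ℝ) (c w : E) : ℝ := max (1 - 4 * ‖w - c‖ / r) 0

theorem pushWeight_self (r : ℝ) (c : E) : pushWeight r c c = 1 := by
  simp [pushWeight]

theorem pushWeight_eq_zero {r : ℝ} (hr : 0 < r) {c w : E} (h : r ≤ 4 * ‖w - c‖) :
    pushWeight r c w = 0 := by
  rw [pushWeight, max_eq_right_iff, sub_nonpos, le_div_iff₀ hr]
  linarith

theorem abs_pushWeight_sub_le {r : ℝ} (hr : 0 < r) (c a b : E) :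
    |pushWeight r c a - pushWeight r c b| ≤ 4 * ‖a - b‖ / r :=
  calc |pushWeight r c a - pushWeight r c b|
      ≤ |(1 - 4 * ‖a - c‖ / r) - (1 - 4 * ‖b - c‖ / r)| := abs_max_sub_max_le_abs _ _ _
    _ = 4 * |‖b - c‖ - ‖a - c‖| / r := by
      rw [show (1 - 4 * ‖a - c‖ / r) - (1 - 4 * ‖b - c‖ / r) = 4 * (‖b - c‖ - ‖a - c‖) / r by ring,
        abs_div, abs_mul, abs_of_pos hr, abs_of_pos four_pos]
    _ ≤ 4 * ‖a - b‖ / r := by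
      gcongr
      simpa [norm_sub_rev b a] using abs_norm_sub_norm_le (b - c) (a - c)

variable [NormedSpace ℝ E]

/-- Moves `p.1` to `p'.1` and `p.2` to `p'.2`, leaving everything at distance at least
`‖p.1 - p.2‖ / 4` from both points fixed. -/
def pushPair (p p' : E × E) (w : E) : E :=
  w + pushWeight ‖p.1 - p.2‖ p.1 w • (p'.1 - p.1) + pushWeight ‖p.1 - p.2‖ p.2 w • (p'.2 - p.2)

theorem pushPair_self (p : E × E) (w : E) : pushPair p p w = w := by
  simp [pushPair]

theorem pushPair_fst {p : E × E} (h : p.1 ≠ p.2) (p' : E × E) : pushPair p p' p.1 = p'.1 := by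
  have hr : 0 < ‖p.1 - p.2‖ := norm_pos_iff.2 (sub_ne_zero.2 h)
  rw [pushPair, pushWeight_self, pushWeight_eq_zero hr (by linarith [norm_sub_rev p.1 p.2])]
  module

theorem pushPair_snd {p : E × E} (h : p.1 ≠ p.2) (p' : E × E) : pushPair p p' p.2 = p'.2 := by
  have hr : 0 < ‖p.1 - p.2‖ := norm_pos_iff.2 (sub_ne_zero.2 h)
  rw [pushPair, pushWeight_self, pushWeight_eq_zero hr (by linarith [norm_sub_rev p.1 p.2])]
  module

theorem pushPair_injective {p p' : E × E} (h : p.1 ≠ p.2) (hp' : dist p' p < ‖p.1 - p.2‖ / 8) :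
    Function.Injective (pushPair p p') := by
  set r := ‖p.1 - p.2‖
  have hr : 0 < r := norm_pos_iff.2 (sub_ne_zero.2 h)
  rw [Prod.dist_eq, max_lt_iff, dist_eq_norm, dist_eq_norm] at hp'
  obtain ⟨h₁, h₂⟩ := hp'
  intro a b hab
  have hdiff : a - b = (pushWeight r p.1 b - pushWeight r p.1 a) • (p'.1 - p.1)
      + (pushWeight r p.2 b - pushWeight r p.2 a) • (p'.2 - p.2) := by
    unfold pushPair at hab
    linear_combination (norm := module) hab
  by_contra hne
  have hpos : 0 < ‖a - b‖ := norm_pos_iff.2 (sub_ne_zero.2 hne)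
  -- the displacement is `4 (‖p'.1 - p.1‖ + ‖p'.2 - p.2‖) / r < 1`-Lipschitz
  have : ‖a - b‖ < ‖a - b‖ :=
    calc ‖a - b‖ ≤ 4 * ‖b - a‖ / r * ‖p'.1 - p.1‖ + 4 * ‖b - a‖ / r * ‖p'.2 - p.2‖ := by
          rw [hdiff]
          refine (norm_add_le _ _).trans (add_le_add ?_ ?_) <;>
            rw [norm_smul, Real.norm_eq_abs] <;>
            gcongr <;> exact abs_pushWeight_sub_le hr _ _ _
      _ < 4 * ‖b - a‖ / r * (r / 8) + 4 * ‖b - a‖ / r * (r / 8) := by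
          rw [norm_sub_rev] at hpos
          gcongr
      _ = ‖a - b‖ := by rw [norm_sub_rev]; field_simp; ring
  exact lt_irrefl _ this

theorem Continuous.pushPair {A : Type*} [TopologicalSpace A] {P P' : A → E × E} {W : A → E}
    (hP : Continuous P) (hP' : Continuous P') (hW : Continuous W) (hne : ∀ a, (P a).1 ≠ (P a).2) :
    Continuous fun a => _root_.pushPair (P a) (P' a) (W a) := by
  have hr : ∀ a, ‖(P a).1 - (P a).2‖ ≠ 0 := fun a => norm_ne_zero_iff.2 (sub_ne_zero.2 (hne a))
  have hweight : ∀ c : A → E, Continuous c →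
      Continuous fun a => pushWeight ‖(P a).1 - (P a).2‖ (c a) (W a) := fun c hc =>
    continuous_const.sub ((continuous_const.mul (hW.sub hc).norm).div
      (hP.fst.sub hP.snd).norm hr) |>.max continuous_const
  unfold _root_.pushPair
  exact (hW.add ((hweight _ hP.fst).smul (hP'.fst.sub hP.fst))).add
    ((hweight _ hP.snd).smul (hP'.snd.sub hP.snd))

end PointPush

section Lifting

variable {E A : Type*} [TopologicalSpace A]

/-- `w ↦ (H w, Z w)` is a lift of the homotopy `H` to `Conf₃(E)`. -/
structure IsAvoidingLift [TopologicalSpace E] (H : I × A → E × E) (f : A → E) (Z : I × A → E) :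
    Prop where
  continuous : Continuous Z
  apply_zero : ∀ a, Z (0, a) = f a
  avoids : ∀ w, Z w ≠ (H w).1 ∧ Z w ≠ (H w).2
  stationary : ∀ a, (∀ t, H (t, a) = H (0, a)) → ∀ t, Z (t, a) = f a

theorem isAvoidingLift_zero [TopologicalSpace E] (H : I × A → E × E) {f : A → E}
    (hf : Continuous f) (hf0 : ∀ a, f a ≠ (H (0, a)).1 ∧ f a ≠ (H (0, a)).2) :
    IsAvoidingLift (fun w => H (min w.1 0, w.2)) f (fun w => f w.2) :=
  ⟨hf.comp continuous_snd, fun _ => rfl, fun w => by simpa using hf0 w.2, fun _ _ _ => rfl⟩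

variable [NormedAddCommGroup E] [NormedSpace ℝ E]

theorem IsAvoidingLift.extend {H : I × A → E × E} (hHc : Continuous H)
    (hH : ∀ w, (H w).1 ≠ (H w).2) {s s' : I} (hss' : s ≤ s')
    (hclose : ∀ a t, s ≤ t → t ≤ s' →
      dist (H (t, a)) (H (s, a)) < ‖(H (s, a)).1 - (H (s, a)).2‖ / 8)
    {f : A → E} {Z : I × A → E} (hZ : IsAvoidingLift (fun w => H (min w.1 s, w.2)) f Z) :
    IsAvoidingLift (fun w => H (min w.1 s', w.2)) f
      (fun w => pushPair (H (s, w.2)) (H (max s (min w.1 s'), w.2)) (Z w)) := by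
  refine ⟨?_, fun a => ?_, fun ⟨t, a⟩ => ?_, fun a hst t => ?_⟩
  · exact (hHc.comp (continuous_const.prodMk continuous_snd)).pushPair
      (hHc.comp ((continuous_const.max (continuous_fst.min continuous_const)).prodMk
        continuous_snd)) hZ.continuous fun _ => hH _
  · simpa [pushPair_self] using hZ.apply_zero a
  · rcases le_total t s with hts | hst
    · simp only [min_eq_left (hts.trans hss'), max_eq_left hts, pushPair_self]
      simpa [min_eq_left hts] using hZ.avoids (t, a)
    · have hc : max s (min t s') = min t s' := max_eq_right (le_min hst hss')
      have hZt := hZ.avoids (t, a)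
      simp only [min_eq_right hst] at hZt
      have hinj := pushPair_injective (hH (s, a))
        (hclose a _ (le_min hst hss') (min_le_right _ _))
      simp only [hc]
      exact ⟨pushPair_fst (hH (s, a)) _ ▸ hinj.ne hZt.1, pushPair_snd (hH (s, a)) _ ▸ hinj.ne hZt.2⟩
  · have hconst : ∀ u ≤ s', H (u, a) = H (0, a) := fun u hu => by
      simpa [min_eq_left hu] using hst u
    have hs : H (s, a) = H (0, a) := hconst s hss'
    simp only [hs, hconst _ (max_le hss' (min_le_right _ _)), pushPair_self]
    exact hZ.stationary a (fun u => by simp [hconst _ ((min_le_right u s).trans hss')]) t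

theorem exists_isAvoidingLift [CompactSpace A] (H : C(I × A, E × E))
    (hH : ∀ w, (H w).1 ≠ (H w).2) {f : A → E} (hf : Continuous f)
    (hf0 : ∀ a, f a ≠ (H (0, a)).1 ∧ f a ≠ (H (0, a)).2) : ∃ Z, IsAvoidingLift H f Z := by
  obtain ⟨d, hd, hdH⟩ : ∃ d > 0, ∀ w ∈ Set.univ, d ≤ ‖(H w).1 - (H w).2‖ :=
    isCompact_univ.exists_forall_le' (by fun_prop)
      fun w _ => norm_pos_iff.2 (sub_ne_zero.2 (hH w))
  -- `t ↦ H (t, ·)` is uniformly continuous into `C(A, E × E)` with the sup metric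
  obtain ⟨δ, hδ, hHδ⟩ := Metric.uniformContinuous_iff.1
    (CompactSpace.uniformContinuous_of_continuous H.curry.continuous) (d / 8) (by positivity)
  have exists_lift_upTo : ∀ n : ℕ, ∀ s : I, (s : ℝ) ≤ n * (δ / 2) →
      ∃ Z, IsAvoidingLift (fun w => H (min w.1 s, w.2)) f Z := by
    intro n
    induction n with
    | zero =>
      intro s hs
      obtain rfl : s = 0 := Subtype.ext (le_antisymm (by simpa using hs) s.2.1)
      exact ⟨_, isAvoidingLift_zero H hf hf0⟩
    | succ n ih =>
      intro s hs
      rcases le_or_gt (s : ℝ) (n * (δ / 2)) with hsn | hsn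
      · exact ih s hsn
      let s₀ : I := ⟨n * (δ / 2), by positivity, hsn.le.trans s.2.2⟩
      have hs₀ : s₀ ≤ s := hsn.le
      obtain ⟨Z, hZ⟩ := ih s₀ le_rfl
      refine ⟨_, hZ.extend H.continuous hH hs₀ fun a t ht₀ hts => ?_⟩
      have hdist : dist t s₀ < δ := by
        have ht₀' : (s₀ : ℝ) ≤ t := ht₀
        have hts' : (t : ℝ) ≤ s := hts
        rw [Subtype.dist_eq, Real.dist_eq, abs_of_nonneg (sub_nonneg.2 ht₀')]
        push_cast at hs
        linarith [show (s₀ : ℝ) = n * (δ / 2) from rfl]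
      calc dist (H (t, a)) (H (s₀, a)) ≤ dist (H.curry t) (H.curry s₀) :=
            ContinuousMap.dist_apply_le_dist (f := H.curry t) (g := H.curry s₀) a
        _ < d / 8 := hHδ hdist
        _ ≤ _ := by gcongr; exact hdH _ trivial
  obtain ⟨n, hn⟩ := exists_nat_ge (2 / δ)
  obtain ⟨Z, hZ⟩ := exists_lift_upTo n 1 (by
    rw [div_le_iff₀ hδ] at hn
    push_cast
    linarith)
  simp only [min_eq_left le_one'] at hZ
  exact ⟨Z, hZ⟩

end Lifting

def forgetThird : C(Conf3, Conf2) :=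
  ⟨fun w => ⟨(w.1.1, w.1.2.1), w.2.1⟩, by fun_prop⟩

def addReflection : C(Conf2, Conf3) :=
  ⟨fun w => ⟨(w.1.1, w.1.2, (2 : ℝ) • w.1.2 - w.1.1), w.2, fun h => w.2 (by
      linear_combination (norm := module) (1 / 2 : ℝ) • h), fun h => w.2 (by
      linear_combination (norm := module) h)⟩, by fun_prop⟩

def fiberIncl : C(Fib, Conf3) :=
  ⟨fun z => ⟨(q1, q2, z.1), q1_ne_q2, z.2.1.symm, z.2.2.symm⟩, by fun_prop⟩

theorem forgetThird_base3 : forgetThird base3 = base2 := rfl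

theorem fiberIncl_baseF : fiberIncl baseF = base3 := rfl

theorem addReflection_base2 : addReflection base2 = base3 := by
  have h : (2 : ℝ) • q2 - q1 = q3 := by
    simp only [q1, q2, q3, sub_zero, smul_smul]
    norm_num
  exact Subtype.ext (by simp [addReflection, base2, base3, h])

theorem forgetThird_addReflection (w : Conf2) : forgetThird (addReflection w) = w := rfl

theorem forgetThird_fiberIncl (z : Fib) : forgetThird (fiberIncl z) = base2 := rfl

theorem fiberIncl_injective : Function.Injective fiberIncl :=
  fun _ _ h => Subtype.ext (congrArg (fun w : Conf3 => w.1.2.2) h)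

theorem Conf3.ext_of_forgetThird {w w' : Conf3} (h : forgetThird w = forgetThird w')
    (h₃ : w.1.2.2 = w'.1.2.2) : w = w' := by
  have h' := congrArg Subtype.val h
  simp only [forgetThird, ContinuousMap.coe_mk, Prod.mk.injEq] at h'
  exact Subtype.ext (Prod.ext h'.1 (Prod.ext h'.2 h₃))

def codRestrictFiber {Y : Type*} [TopologicalSpace Y] (F : C(Y, Conf3))
    (hF : ∀ y, forgetThird (F y) = base2) : C(Y, Fib) :=
  ⟨fun y => ⟨(F y).1.2.2,
    fun h => (F y).2.2.1 ((congrArg (fun w : Conf2 => w.1.1) (hF y)).trans h.symm),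
    fun h => (F y).2.2.2 ((congrArg (fun w : Conf2 => w.1.2) (hF y)).trans h.symm)⟩, by fun_prop⟩

theorem fiberIncl_codRestrictFiber {Y : Type*} [TopologicalSpace Y] (F : C(Y, Conf3))
    (hF : ∀ y, forgetThird (F y) = base2) (y : Y) : fiberIncl (codRestrictFiber F hF y) = F y :=
  Conf3.ext_of_forgetThird (hF y).symm rfl

theorem forgetThird_exists_lift {A : Type*} [TopologicalSpace A] [CompactSpace A]
    (H : C(I × A, Conf2)) (f : C(A, Conf3)) (hf : ∀ a, forgetThird (f a) = H (0, a)) :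
    ∃ L : C(I × A, Conf3), (∀ w, forgetThird (L w) = H w) ∧ (∀ a, L (0, a) = f a) ∧
      ∀ a, (∀ t, H (t, a) = H (0, a)) → ∀ t, L (t, a) = f a := by
  obtain ⟨Z, hZ⟩ := exists_isAvoidingLift ⟨fun w => (H w).1, by fun_prop⟩ (fun w => (H w).2)
    (f := fun a => (f a).1.2.2) (by fun_prop) fun a => by
      simpa [← hf a, forgetThird] using And.intro (f a).2.2.1.symm (f a).2.2.2.symm
  refine ⟨⟨fun w => ⟨((H w).1.1, (H w).1.2, Z w), (H w).2, (hZ.avoids w).1.symm,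
    (hZ.avoids w).2.symm⟩, by have := hZ.continuous; fun_prop⟩, fun w => rfl,
    fun a => Conf3.ext_of_forgetThird (hf a).symm (hZ.apply_zero a), fun a hst t => ?_⟩
  have hst' : ∀ t, (H (t, a)).1 = (H (0, a)).1 := fun t => congrArg Subtype.val (hst t)
  exact Conf3.ext_of_forgetThird ((Subtype.ext (hst' t)).trans (hf a).symm)
    (hZ.stationary a hst' t)

def tent : C(I, I) :=
  ⟨fun t => Set.projIcc 0 1 zero_le_one (1 - |2 * (t : ℝ) - 1|), by fun_prop⟩

theorem tent_zero : tent 0 = 0 := by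
  simp [tent, Set.projIcc]

theorem tent_one : tent 1 = 0 := by
  norm_num [tent, Set.projIcc]

theorem tent_of_eq_half {t : I} (ht : (t : ℝ) = 1 / 2) : tent t = 1 := by
  simp [tent, ht, Set.projIcc]

section Backtrack

variable {A : Type*} [TopologicalSpace A]

/-- In `Conf₂` this is `forgetThird ∘ G` followed by its reverse. -/
def backtrack (G : C(I × A, Conf3)) (hG : ∀ a, G (1, a) = base3) : C(I × A, Conf3) :=
  ⟨fun w => if (w.1 : ℝ) ≤ 1 / 2 then G (tent w.1, w.2)
    else addReflection (forgetThird (G (tent w.1, w.2))), by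
    refine Continuous.if_le (by fun_prop) (by fun_prop) (by fun_prop) continuous_const
      fun w hw => ?_
    simp [tent_of_eq_half hw, hG, forgetThird_base3, addReflection_base2]⟩

variable {G : C(I × A, Conf3)} {hG : ∀ a, G (1, a) = base3}

theorem forgetThird_backtrack (w : I × A) :
    forgetThird (backtrack G hG w) = forgetThird (G (tent w.1, w.2)) := by
  simp only [backtrack, ContinuousMap.coe_mk]
  split_ifs <;> rfl

theorem backtrack_zero (a : A) : backtrack G hG (0, a) = G (0, a) := by
  simp [backtrack, tent_zero]

theorem backtrack_one (a : A) : backtrack G hG (1, a) = addReflection (forgetThird (G (0, a))) := by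
  simp [backtrack, tent_one, show ¬(1 : ℝ) ≤ 2⁻¹ by norm_num]

theorem backtrack_of_forall_eq {a : A} (ha : ∀ t, G (t, a) = base3) (t : I) :
    backtrack G hG (t, a) = base3 := by
  simp [backtrack, ha, forgetThird_base3, addReflection_base2]

end Backtrack

section Exactness

variable {N : Type*} [DecidableEq N] [Nonempty N]

theorem ker_map_forgetThird_le_range_map_fiberIncl :
    (HomotopyGroup.map (N := N) forgetThird forgetThird_base3).ker ≤
      (HomotopyGroup.map fiberIncl fiberIncl_baseF).range := by
  intro α hα
  induction α using Quotient.inductionOn with | _ γ =>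
  obtain ⟨G⟩ : GenLoop.Homotopic (GenLoop.map forgetThird forgetThird_base3 γ) GenLoop.const :=
    Quotient.exact hα
  obtain ⟨L, hLG, hL0, hLst⟩ :=
    forgetThird_exists_lift G.toContinuousMap γ.1 fun a => (G.apply_zero a).symm
  have hLb : ∀ t, ∀ a ∈ Cube.boundary N, L (t, a) = base3 := fun t a ha =>
    (hLst a (fun t => G.eq_fst t ha |>.trans (G.eq_fst 0 ha).symm) t).trans
      (GenLoop.boundary γ a ha)
  have hL1 : ∀ a, forgetThird (L.curry 1 a) = base2 := fun a => (hLG (1, a)).trans (G.apply_one a)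
  let g : Ω^ N Fib baseF := ⟨codRestrictFiber (L.curry 1) hL1, fun a ha =>
    fiberIncl_injective ((fiberIncl_codRestrictFiber _ hL1 a).trans (hLb 1 a ha))⟩
  exact ⟨⟦g⟧, Quotient.sound (GenLoop.homotopic_of_continuousMap
    (γ' := GenLoop.map fiberIncl fiberIncl_baseF g) L hL0
    (fun a => (fiberIncl_codRestrictFiber _ hL1 a).symm) hLb).symm⟩

theorem map_fiberIncl_injective :
    Function.Injective (HomotopyGroup.map (N := N) fiberIncl fiberIncl_baseF) := by
  rw [injective_iff_map_eq_one]
  intro β hβ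
  induction β using Quotient.inductionOn with | _ g =>
  obtain ⟨G⟩ : GenLoop.Homotopic (GenLoop.map fiberIncl fiberIncl_baseF g) GenLoop.const :=
    Quotient.exact hβ
  have hGb : ∀ t, ∀ a ∈ Cube.boundary N, G (t, a) = base3 := fun t a ha => by
    simp [G.eq_fst t ha, GenLoop.boundary g a ha, fiberIncl_baseF]
  -- contracts the image of `backtrack G` in `Conf₂`, keeping the faces `t = 0`, `t = 1` and the
  -- boundary fixed
  let K : C(I × (I × I^N), Conf2) :=
    ⟨fun v => forgetThird (G (min (tent v.2.1) (σ v.1), v.2.2)), by fun_prop⟩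
  have hKst : ∀ t a, (tent t = 0 ∨ a ∈ Cube.boundary N) → ∀ u, K (u, (t, a)) = K (0, (t, a)) := by
    rintro t a (ht | ha) u
    · simp [K, ht]
    · simp [K, hGb _ a ha]
  have hG1 : ∀ a, G.toContinuousMap (1, a) = base3 := G.apply_one
  obtain ⟨L, hLK, -, hLst⟩ :=
    forgetThird_exists_lift K (backtrack G.toContinuousMap hG1) fun w => by
      rw [forgetThird_backtrack]
      simp only [K, ContinuousMap.coe_mk, symm_zero, min_eq_left le_one']
      rfl
  have hL1 : ∀ w, forgetThird (L.curry 1 w) = base2 := fun w => by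
    simp [hLK, K, forgetThird_fiberIncl]
  refine Quotient.sound (GenLoop.homotopic_of_continuousMap (γ' := GenLoop.const)
    (codRestrictFiber (L.curry 1) hL1) (fun a => fiberIncl_injective ?_)
    (fun a => fiberIncl_injective ?_) (fun t a ha => fiberIncl_injective ?_)) <;>
    simp only [fiberIncl_codRestrictFiber, ContinuousMap.curry_apply]
  · rw [hLst _ (hKst 0 a (.inl tent_zero)), backtrack_zero]
    simp
  · rw [hLst _ (hKst 1 a (.inl tent_one)), backtrack_one]
    simp [forgetThird_fiberIncl, addReflection_base2, GenLoop.const_apply, fiberIncl_baseF]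
  · rw [hLst _ (hKst t a (.inr ha)), backtrack_of_forall_eq (hGb · a ha), fiberIncl_baseF]

theorem map_forgetThird_map_fiberIncl (b : HomotopyGroup N Fib baseF) :
    HomotopyGroup.map forgetThird forgetThird_base3 (HomotopyGroup.map fiberIncl fiberIncl_baseF b)
      = 1 := by
  rw [HomotopyGroup.map_map]
  exact HomotopyGroup.map_eq_one _ forgetThird_fiberIncl b

theorem ker_map_forgetThird_eq_range_map_fiberIncl :
    (HomotopyGroup.map (N := N) forgetThird forgetThird_base3).ker =
      (HomotopyGroup.map fiberIncl fiberIncl_baseF).range :=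
  le_antisymm ker_map_forgetThird_le_range_map_fiberIncl <| by
    rintro _ ⟨b, rfl⟩
    exact map_forgetThird_map_fiberIncl b

theorem map_forgetThird_map_addReflection (a : HomotopyGroup N Conf2 base2) :
    HomotopyGroup.map forgetThird forgetThird_base3
      (HomotopyGroup.map addReflection addReflection_base2 a) = a := by
  rw [HomotopyGroup.map_map]
  exact HomotopyGroup.map_eq_self _ forgetThird_addReflection a

end Exactness

/-- For every `k ≥ 2` there is a group isomorphism
`π_k(Conf₃(ℝ³)) ≅ π_k(Conf₂(ℝ³)) × π_k(ℝ³ ∖ {q₁, q₂})`, the homotopy groups being taken at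
the basepoints `(q₁,q₂,q₃)`, `(q₁,q₂)` and `q₃` respectively. -/
theorem homotopy_groups_conf3_split : ∀ k : ℕ, ∀ _hk : 2 ≤ k,
    haveI : Nonempty (Fin k) := ⟨⟨0, by omega⟩⟩
    Nonempty ((π_ k Conf3 base3) ≃* ((π_ k Conf2 base2) × (π_ k Fib baseF))) := by
  intro k hk
  have : Nontrivial (Fin k) := Fin.nontrivial_iff_two_le.2 hk
  exact ⟨(MulEquiv.ofBijective _ (MonoidHom.bijective_noncommCoprod_of_splitExact
    map_forgetThird_map_addReflection map_fiberIncl_injective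
    ker_map_forgetThird_eq_range_map_fiberIncl fun _ _ => Commute.all _ _)).symm⟩
end
end
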